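/- Let m ≥ 2, n = m+1, h > 0, z_F > 0, M_α > 0, L ≥ 0, ε ≥ 0, J > 0, with m·h ≤ 1. Let D ∈ ℝⁿ have entries D_1,…,D_n with D_k > 0 for all k, and with D_{k+1/2} := (D_k + D_{k+1})/2 assume: (i) S_h := z_F·Σ_{k=1}^{m} h/D_{k+1/2} ≤ J; (ii) |D_i − D_{i+2}| ≤ 2hL for all 1 ≤ i < m−1; (iii) D_j ≤ ε for all m−1 ≤ j ≤ n; (iv) ε·M_α·J ≤ 1/2. Let G = (1/z_F)·S(D) − M_α·A(D) with S(D), A(D) defined below. Then for every v ∈ ℝ^m, vᵀGv ≥ (1/(2J) − M_α·L/2)·(h·Σ_{i=1}^{m} v_i²). -/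

import Mathlib

/-!
Write `u = pad1 v`, so `u 0 = 0`. The stiffness matrix factors as `S(D) = Bᵀ diag(w) B` with
`B` the backward difference and `w_k = D_{k+1/2} / h`, so `vᵀ S(D) v` is the discrete Dirichlet
energy `Q = ∑ w_k (u_{k+1} - u_k)²`. Cauchy–Schwarz along the telescoping sum
`u_k = ∑_{j<k} (u_{j+1} - u_j)` gives `u_k² ≤ (∑ 1/w_j) Q = (S_h / z_F) Q ≤ (J / z_F) Q`, hence
`h ∑ v_i² ≤ (J / z_F) Q` as `m h ≤ 1`. The off-diagonal part of `A(D)` is antisymmetric, so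
`vᵀ A(D) v` only sees the diagonal, which is at most `hL/2` in the interior by (ii) and at most
`ε/2` in the last two rows by (iii). By (iv) these two rows cost at most
`ε M_α J Q / z_F ≤ Q / (2 z_F)`, and the remaining `Q / (2 z_F)` dominates `h ∑ v_i² / (2J)`.
-/

open Matrix Finset

/-- 1-based access to the entries of a finite vector, with value `0` at index `0`
and out of range. -/
def pad1 {n : ℕ} (v : Fin n → ℝ) : ℕ → ℝ :=
  fun k => if hk : k - 1 < n then (if k = 0 then 0 else v ⟨k - 1, hk⟩) else 0

/-- `D_{k+1/2} = (D_k + D_{k+1})/2` (1-based mathematical indexing). -/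
noncomputable def Dhalf {n : ℕ} (D : Fin n → ℝ) (k : ℕ) : ℝ :=
  (pad1 D k + pad1 D (k + 1)) / 2

/-- `S_h = z_F Σ_{k=1}^m h / D_{k+1/2}`. -/
noncomputable def Sh (m : ℕ) (h zF : ℝ) (D : Fin (m + 1) → ℝ) : ℝ :=
  zF * ∑ k ∈ Finset.Icc 1 m, h / Dhalf D k

/-- The symmetric tridiagonal stiffness matrix `S(D)` (1-based mathematical indexing). -/
noncomputable def matS (m : ℕ) (h : ℝ) (d : ℕ → ℝ) : Matrix (Fin m) (Fin m) ℝ :=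
  Matrix.of fun i j =>
    if i = j then
      (if i.val + 1 = m then (d m + d (m + 1)) / (2 * h)
       else (d (i.val + 1) + 2 * d (i.val + 2) + d (i.val + 3)) / (2 * h))
    else if i.val + 1 = j.val then -((d (i.val + 2) + d (i.val + 3)) / (2 * h))
    else if j.val + 1 = i.val then -((d (j.val + 2) + d (j.val + 3)) / (2 * h))
    else 0

/-- The tridiagonal matrix `A(D)` (1-based mathematical indexing). -/
noncomputable def matA (m : ℕ) (d : ℕ → ℝ) : Matrix (Fin m) (Fin m) ℝ :=
  Matrix.of fun i j =>
    if i = j then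
      (if i.val + 1 = m then (d m + d (m + 1)) / 4
       else (d (i.val + 1) - d (i.val + 3)) / 4)
    else if i.val + 1 = j.val then (d (i.val + 2) + d (i.val + 3)) / 4
    else if j.val + 1 = i.val then -((d (j.val + 2) + d (j.val + 3)) / 4)
    else 0

@[simp]
lemma pad1_zero {n : ℕ} (v : Fin n → ℝ) : pad1 v 0 = 0 := by
  simp [pad1]

@[simp]
lemma pad1_succ {n : ℕ} (v : Fin n → ℝ) (i : Fin n) : pad1 v (i + 1) = v i := by
  simp [pad1]

lemma pad1_pos {n : ℕ} {v : Fin n → ℝ} (hv : ∀ i, 0 < v i) {k : ℕ} (hk₀ : 1 ≤ k)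
    (hk : k ≤ n) : 0 < pad1 v k := by
  obtain ⟨i, rfl⟩ : ∃ i, k = i + 1 := ⟨k - 1, by omega⟩
  convert hv ⟨i, by omega⟩ using 1
  exact pad1_succ v ⟨i, by omega⟩

lemma sum_sq_eq_sum_range_pad1 {n : ℕ} (v : Fin n → ℝ) :
    ∑ i, v i ^ 2 = ∑ k ∈ range n, pad1 v (k + 1) ^ 2 := by
  rw [← Fin.sum_univ_eq_sum_range]
  simp

def dirichletEnergy (n : ℕ) (w u : ℕ → ℝ) : ℝ :=
  ∑ j ∈ range n, w j * (u (j + 1) - u j) ^ 2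

lemma dirichletEnergy_nonneg {n : ℕ} {w : ℕ → ℝ} (hw : ∀ j < n, 0 < w j) (u : ℕ → ℝ) :
    0 ≤ dirichletEnergy n w u :=
  sum_nonneg fun j hj => mul_nonneg (hw j (mem_range.mp hj)).le (sq_nonneg _)

lemma dirichletEnergy_mono {n n' : ℕ} (hn : n ≤ n') {w : ℕ → ℝ} (hw : ∀ j < n', 0 < w j)
    (u : ℕ → ℝ) : dirichletEnergy n w u ≤ dirichletEnergy n' w u :=
  sum_le_sum_of_subset_of_nonneg (range_subset_range.mpr hn) fun j hj _ =>
    mul_nonneg (hw j (mem_range.mp hj)).le (sq_nonneg _)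

lemma sq_le_sum_inv_mul_dirichletEnergy {n k : ℕ} {w u : ℕ → ℝ} (hw : ∀ j < n, 0 < w j)
    (hu : u 0 = 0) (hk : k ≤ n) :
    u k ^ 2 ≤ (∑ j ∈ range n, 1 / w j) * dirichletEnergy n w u := by
  have hwk : ∀ j ∈ range k, 0 < w j := fun j hj => hw j (by simp at hj; omega)
  have htel : u k = ∑ j ∈ range k, (u (j + 1) - u j) := by rw [sum_range_sub, hu, sub_zero]
  calc u k ^ 2 ≤ (∑ j ∈ range k, 1 / w j) * dirichletEnergy k w u := by
        rw [htel]
        refine sum_sq_le_sum_mul_sum_of_sq_le_mul _ (fun j hj => (one_div_pos.mpr (hwk j hj)).le)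
          (fun j hj => mul_nonneg (hwk j hj).le (sq_nonneg _)) fun j hj => le_of_eq ?_
        field_simp [(hwk j hj).ne']
    _ ≤ (∑ j ∈ range n, 1 / w j) * dirichletEnergy n w u := by
        refine mul_le_mul ?_ (dirichletEnergy_mono hk hw u)
          (dirichletEnergy_nonneg (fun j hj => hw j (by omega)) u)
          (sum_nonneg fun j hj => (one_div_pos.mpr (hw j (mem_range.mp hj))).le)
        exact sum_le_sum_of_subset_of_nonneg (range_subset_range.mpr hk)
          fun j hj _ => (one_div_pos.mpr (hw j (mem_range.mp hj))).le

lemma mul_sum_sq_le_mul_dirichletEnergy {n : ℕ} {w u : ℕ → ℝ} {h C : ℝ}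
    (hw : ∀ j < n, 0 < w j) (hu : u 0 = 0) (hh : 0 ≤ h) (hnh : n * h ≤ 1)
    (hC : ∑ j ∈ range n, 1 / w j ≤ C) :
    h * ∑ k ∈ range n, u (k + 1) ^ 2 ≤ C * dirichletEnergy n w u := by
  have hE := dirichletEnergy_nonneg hw u
  have hC₀ : 0 ≤ C :=
    (sum_nonneg fun j hj => (one_div_pos.mpr (hw j (mem_range.mp hj))).le).trans hC
  have hpt : ∀ k ∈ range n, u (k + 1) ^ 2 ≤ C * dirichletEnergy n w u := fun k hk =>
    (sq_le_sum_inv_mul_dirichletEnergy hw hu (mem_range.mp hk)).trans (by gcongr)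
  calc h * ∑ k ∈ range n, u (k + 1) ^ 2 ≤ h * (n * (C * dirichletEnergy n w u)) := by
        grw [sum_le_sum hpt]; simp
    _ = (n * h) * (C * dirichletEnergy n w u) := by ring
    _ ≤ C * dirichletEnergy n w u := mul_le_of_le_one_left (mul_nonneg hC₀ hE) hnh

lemma dotProduct_mulVec_self_of_antisymm {ι R : Type*} [Fintype ι] [DecidableEq ι] [Field R]
    [CharZero R] (T : Matrix ι ι R) (hT : ∀ i j, i ≠ j → T j i = -T i j) (v : ι → R) :
    v ⬝ᵥ T *ᵥ v = ∑ i, T i i * v i ^ 2 := by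
  have htr : v ⬝ᵥ Tᵀ *ᵥ v = v ⬝ᵥ T *ᵥ v := by
    rw [dotProduct_mulVec, vecMul_transpose, dotProduct_comm]
  have hsym : T + Tᵀ = diagonal fun i => 2 * T i i := by
    ext i j
    by_cases hij : i = j
    · subst hij; simp [two_mul]
    · simp [hij, hT i j hij]
  have h2 : v ⬝ᵥ (T + Tᵀ) *ᵥ v = 2 * ∑ i, T i i * v i ^ 2 := by
    simp only [hsym, mulVec_diagonal, dotProduct, mul_sum]
    exact sum_congr rfl fun i _ => by ring
  rw [add_mulVec, dotProduct_add, htr, ← two_mul] at h2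
  exact mul_left_cancel₀ two_ne_zero h2

lemma dotProduct_transpose_mul_diagonal_mul_mulVec {ι R : Type*} [Fintype ι] [DecidableEq ι]
    [CommRing R] (B : Matrix ι ι R) (w v : ι → R) :
    v ⬝ᵥ (Bᵀ * diagonal w * B) *ᵥ v = ∑ k, w k * (B *ᵥ v) k ^ 2 := by
  rw [← mulVec_mulVec, ← mulVec_mulVec, dotProduct_mulVec, vecMul_transpose]
  simp only [dotProduct, mulVec_diagonal]
  exact sum_congr rfl fun k _ => by ring

/-- `(B v)_k = v_k - v_{k-1}` in 1-based indexing, with `v_0 = 0`. -/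
def backwardDiff (m : ℕ) : Matrix (Fin m) (Fin m) ℝ :=
  of fun k i => if k.val = i.val then 1 else if k.val = i.val + 1 then -1 else 0

lemma sum_backwardDiff_mul {m : ℕ} (i : Fin m) (g : ℕ → ℝ) :
    ∑ k : Fin m, backwardDiff m k i * g k = g i - if i.val + 1 < m then g (i + 1) else 0 := by
  have hsplit : ∀ k : ℕ, (if k = i.val then 1 else if k = i.val + 1 then -1 else 0) * g k =
      (if k = i.val then g k else 0) - (if k = i.val + 1 then g k else 0) := by
    intro k; split_ifs <;> first | omega | ring
  simp only [backwardDiff, of_apply]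
  rw [Fin.sum_univ_eq_sum_range
    (fun k => (if k = i.val then 1 else if k = i.val + 1 then -1 else 0) * g k)]
  simp [hsplit, sum_sub_distrib, sum_ite_eq']

lemma backwardDiff_mulVec {m : ℕ} (v : Fin m → ℝ) (k : Fin m) :
    (backwardDiff m *ᵥ v) k = pad1 v (k + 1) - pad1 v k := by
  have hsplit : ∀ i : ℕ,
      (if k.val = i then 1 else if k.val = i + 1 then -1 else 0) * pad1 v (i + 1) =
        (if i = k.val then pad1 v (i + 1) else 0) -
          (if i + 1 = k.val then pad1 v (i + 1) else 0) := by
    intro i; split_ifs <;> first | omega | ring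
  simp only [mulVec, dotProduct, backwardDiff, of_apply]
  simp_rw [← pad1_succ v]
  rw [Fin.sum_univ_eq_sum_range
    (fun i => (if k.val = i then 1 else if k.val = i + 1 then -1 else 0) * pad1 v (i + 1))]
  simp only [hsplit, sum_sub_distrib, sum_ite_eq', mem_range, k.isLt, if_true]
  rcases k with ⟨_ | k, hk⟩
  · simp
  · simp [show k < m by omega]

lemma matS_eq_transpose_mul_diagonal_mul (m : ℕ) (h : ℝ) (d : ℕ → ℝ) :
    matS m h d = (backwardDiff m)ᵀ *
      diagonal (fun k : Fin m => (d (k + 1) + d (k + 2)) / (2 * h)) * backwardDiff m := by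
  ext i j
  rw [Matrix.mul_assoc, mul_apply]
  simp only [transpose_apply, diagonal_mul]
  have := sum_backwardDiff_mul i (fun k => (d (k + 1) + d (k + 2)) / (2 * h) *
    (if k = j.val then 1 else if k = j.val + 1 then -1 else 0))
  simp only [backwardDiff, of_apply] at this ⊢
  rw [this]
  simp only [matS, of_apply, Fin.ext_iff]
  obtain ⟨a, ha⟩ := i
  obtain ⟨b, hb⟩ := j
  simp only
  split_ifs <;> (try subst_vars) <;> first | omega | ring_nf

lemma dotProduct_matS_mulVec (m : ℕ) (h : ℝ) (d : ℕ → ℝ) (v : Fin m → ℝ) :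
    v ⬝ᵥ matS m h d *ᵥ v =
      dirichletEnergy m (fun k => (d (k + 1) + d (k + 2)) / (2 * h)) (pad1 v) := by
  rw [matS_eq_transpose_mul_diagonal_mul, dotProduct_transpose_mul_diagonal_mul_mulVec,
    dirichletEnergy, ← Fin.sum_univ_eq_sum_range]
  simp only [backwardDiff_mulVec]

lemma matA_antisymm (m : ℕ) (d : ℕ → ℝ) (i j : Fin m) (hij : i ≠ j) :
    matA m d j i = -matA m d i j := by
  rw [Ne, Fin.ext_iff] at hij
  simp only [matA, of_apply, Fin.ext_iff]
  split_ifs <;> first | omega | ring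

lemma dotProduct_matA_mulVec_le {M : ℕ} {d : ℕ → ℝ} {c ε : ℝ} (hc : 0 ≤ c)
    (hinner : ∀ k < M, d (k + 1) - d (k + 3) ≤ 2 * c) (hpen : d (M + 1) - d (M + 3) ≤ 2 * ε)
    (hlast : d (M + 2) + d (M + 3) ≤ 2 * ε) (v : Fin (M + 2) → ℝ) :
    v ⬝ᵥ matA (M + 2) d *ᵥ v ≤
      c / 2 * ∑ i, v i ^ 2 + ε / 2 * (pad1 v (M + 1) ^ 2 + pad1 v (M + 2) ^ 2) := by
  set a : ℕ → ℝ := fun k => if k + 1 = M + 2 then (d (M + 2) + d (M + 3)) / 4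
    else (d (k + 1) - d (k + 3)) / 4
  have hdiag : ∑ i, matA (M + 2) d i i * v i ^ 2 =
      ∑ k ∈ range (M + 2), a k * pad1 v (k + 1) ^ 2 := by
    rw [← Fin.sum_univ_eq_sum_range]
    simp [a, matA]
  have hinner' : ∑ k ∈ range M, a k * pad1 v (k + 1) ^ 2 ≤
      ∑ k ∈ range M, c / 2 * pad1 v (k + 1) ^ 2 :=
    sum_le_sum fun k hk => by
      have := hinner k (mem_range.mp hk)
      simp only [a, if_neg (show k + 1 ≠ M + 2 by simp at hk; omega)]
      exact mul_le_mul_of_nonneg_right (by linarith) (sq_nonneg _)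
  have hpen' : a M * pad1 v (M + 1) ^ 2 ≤ ε / 2 * pad1 v (M + 1) ^ 2 := by
    simp only [a, if_neg (show M + 1 ≠ M + 2 by omega)]
    exact mul_le_mul_of_nonneg_right (by linarith) (sq_nonneg _)
  have hlast' : a (M + 1) * pad1 v (M + 2) ^ 2 ≤ ε / 2 * pad1 v (M + 2) ^ 2 := by
    simp only [a, if_pos rfl]
    exact mul_le_mul_of_nonneg_right (by linarith) (sq_nonneg _)
  have hrest : 0 ≤ c / 2 * (pad1 v (M + 1) ^ 2 + pad1 v (M + 2) ^ 2) := by positivity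
  rw [dotProduct_mulVec_self_of_antisymm _ (matA_antisymm _ _), sum_sq_eq_sum_range_pad1, hdiag]
  simp only [sum_range_succ, ← mul_sum] at hinner' ⊢
  linarith

lemma Sh_eq_mul_sum_inv (m : ℕ) (h zF : ℝ) (D : Fin (m + 1) → ℝ) :
    Sh m h zF D = zF * ∑ k ∈ range m, 1 / ((pad1 D (k + 1) + pad1 D (k + 2)) / (2 * h)) := by
  have hterm : ∀ k, 1 / ((pad1 D (k + 1) + pad1 D (k + 2)) / (2 * h)) = h / Dhalf D (k + 1) :=
    fun k => by rw [Dhalf, one_div_div, div_div_eq_mul_div]; ring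
  simp only [hterm]
  rw [Sh, range_eq_Ico, sum_Ico_add' (fun k => h / Dhalf D k), zero_add,
    Ico_add_one_right_eq_Icc]

theorem stmt_16 (m : ℕ) (hm : 2 ≤ m) (h zF Ma L ε J : ℝ)
    (hh : 0 < h) (hzF : 0 < zF) (hMa : 0 < Ma) (hL : 0 ≤ L) (hε : 0 ≤ ε) (hJ : 0 < J)
    (hmh : (m : ℝ) * h ≤ 1)
    (D : Fin (m + 1) → ℝ) (hD : ∀ k, 0 < D k)
    (hSh : Sh m h zF D ≤ J)
    (hLip : ∀ i : ℕ, 1 ≤ i → i < m - 1 → |pad1 D i - pad1 D (i + 2)| ≤ 2 * h * L)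
    (hEps : ∀ j : ℕ, m - 1 ≤ j → j ≤ m + 1 → pad1 D j ≤ ε)
    (hεJ : ε * Ma * J ≤ 1 / 2) :
    ∀ v : Fin m → ℝ,
      v ⬝ᵥ ((1 / zF) • matS m h (pad1 D) - Ma • matA m (pad1 D)).mulVec v ≥
        (1 / (2 * J) - Ma * L / 2) * (h * ∑ i : Fin m, (v i) ^ 2) := by
  intro v
  obtain ⟨M, rfl⟩ : ∃ M, m = M + 2 := ⟨m - 2, by omega⟩
  set w : ℕ → ℝ := fun k => (pad1 D (k + 1) + pad1 D (k + 2)) / (2 * h)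
  set Q := dirichletEnergy (M + 2) w (pad1 v)
  have hw : ∀ k < M + 2, 0 < w k := fun k hk => by
    have := pad1_pos hD (k := k + 1) (by omega) (by omega)
    have := pad1_pos hD (k := k + 2) (by omega) (by omega)
    positivity
  have hQ : 0 ≤ Q := dirichletEnergy_nonneg hw _
  have hinv : ∑ k ∈ range (M + 2), 1 / w k ≤ J / zF := by
    rw [le_div_iff₀' hzF, ← Sh_eq_mul_sum_inv]; exact hSh
  have hpt : ∀ k ≤ M + 2, pad1 v k ^ 2 ≤ J / zF * Q := fun k hk =>
    (sq_le_sum_inv_mul_dirichletEnergy hw (pad1_zero v) hk).trans (by gcongr)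
  have hpoinc : h * ∑ i, v i ^ 2 ≤ J / zF * Q := by
    rw [sum_sq_eq_sum_range_pad1]
    exact mul_sum_sq_le_mul_dirichletEnergy hw (pad1_zero v) hh.le hmh hinv
  have hA := dotProduct_matA_mulVec_le (d := pad1 D) (c := h * L) (ε := ε) (by positivity)
    (fun k hk => by simpa [mul_assoc] using (abs_le.mp (hLip (k + 1) (by omega) (by omega))).2)
    (by linarith [hEps (M + 1) (by omega) (by omega), pad1_pos hD (k := M + 3) (by omega) le_rfl])
    (by linarith [hEps (M + 2) (by omega) (by omega), hEps (M + 3) (by omega) (by omega)]) v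
  have hG : v ⬝ᵥ ((1 / zF) • matS (M + 2) h (pad1 D) - Ma • matA (M + 2) (pad1 D)) *ᵥ v =
      Q / zF - Ma * (v ⬝ᵥ matA (M + 2) (pad1 D) *ᵥ v) := by
    simp [sub_mulVec, smul_mulVec, dotProduct_sub, dotProduct_smul, dotProduct_matS_mulVec, Q, w,
      div_eq_inv_mul]
  have hAG : Ma * (v ⬝ᵥ matA (M + 2) (pad1 D) *ᵥ v) ≤
      Ma * L / 2 * (h * ∑ i, v i ^ 2) + 1 / 2 * (Q / zF) :=
    calc Ma * (v ⬝ᵥ matA (M + 2) (pad1 D) *ᵥ v)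
        ≤ Ma * (h * L / 2 * ∑ i, v i ^ 2 + ε / 2 * (J / zF * Q + J / zF * Q)) := by
          grw [hA, hpt (M + 1) (by omega), hpt (M + 2) le_rfl]
      _ = Ma * L / 2 * (h * ∑ i, v i ^ 2) + ε * Ma * J * (Q / zF) := by ring
      _ ≤ _ := by gcongr
  have hSG : 1 / (2 * J) * (h * ∑ i, v i ^ 2) ≤ 1 / 2 * (Q / zF) :=
    calc 1 / (2 * J) * (h * ∑ i, v i ^ 2) ≤ 1 / (2 * J) * (J / zF * Q) := by gcongr
      _ = 1 / 2 * (Q / zF) := by field_simp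
  rw [ge_iff_le, hG]
  linarith
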